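/- arXiv:2411.02977 — 7 statements merged into one kernel-verified Lean document; each statement's English description precedes it below -/
import Mathlib

section
/- For an image-finite LTS, the apartness relation is the complement of strong bisimilarity: x # y if and only if x and y are not strongly bisimilar. -/
/-- A symmetric relation `R` is a strong bisimulation on the LTS `(X, A, tr)`. -/
def IsBisimulation {X A : Type} (tr : X → A → X → Prop) (R : X → X → Prop) : Prop :=
  Symmetric R ∧ ∀ x y, R x y → ∀ a x', tr x a x' → ∃ y', tr y a y' ∧ R x' y'

/-- Strong bisimilarity: the union of all strong bisimulations. -/
def Bisimilar {X A : Type} (tr : X → A → X → Prop) (x y : X) : Prop :=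
  ∃ R, IsBisimulation tr R ∧ R x y

/-- A symmetric relation `R` is an apartness relation on the LTS `(X, A, tr)`. -/
def IsApartnessRel {X A : Type} (tr : X → A → X → Prop) (R : X → X → Prop) : Prop :=
  Symmetric R ∧ ∀ x y a x', tr x a x' → (∀ y', tr y a y' → R x' y') → R x y

/-- Apartness: the intersection of all apartness relations. -/
def Apart {X A : Type} (tr : X → A → X → Prop) (x y : X) : Prop :=
  ∀ R, IsApartnessRel tr R → R x y

/-- An LTS is image-finite if every state has finitely many `a`-successors, for each `a`. -/
def ImageFinite {X A : Type} (tr : X → A → X → Prop) : Prop :=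
  ∀ x a, {x' | tr x a x'}.Finite

section

variable {X A : Type} {tr : X → A → X → Prop}

theorem isApartnessRel_apart : IsApartnessRel tr (Apart tr) :=
  ⟨fun _ _ hxy R hR => hR.1 (hxy R hR),
    fun x y a x' hx hall R hR => hR.2 x y a x' hx fun y' hy => hall y' hy R hR⟩

theorem isApartnessRel_not_bisimilar : IsApartnessRel tr fun x y => ¬ Bisimilar tr x y := by
  refine ⟨fun x y hxy ⟨R, hR, hyx⟩ => hxy ⟨R, hR, hR.1 hyx⟩, ?_⟩
  rintro x y a x' hx hall ⟨R, hR, hxy⟩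
  obtain ⟨y', hy, hxy'⟩ := hR.2 x y hxy a x' hx
  exact hall y' hy ⟨R, hR, hxy'⟩

theorem isBisimulation_not_apart : IsBisimulation tr fun x y => ¬ Apart tr x y := by
  refine ⟨fun x y hxy hyx => hxy (isApartnessRel_apart.1 hyx), fun x y hxy a x' hx => ?_⟩
  by_contra! hall
  exact hxy (isApartnessRel_apart.2 x y a x' hx hall)

end

theorem apart_iff_not_bisimilar_general {X A : Type} (tr : X → A → X → Prop) (x y : X) :
    Apart tr x y ↔ ¬ Bisimilar tr x y :=
  ⟨fun hxy => hxy _ isApartnessRel_not_bisimilar,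
    fun hxy => by_contra fun hnxy => hxy ⟨_, isBisimulation_not_apart, hnxy⟩⟩

theorem apart_iff_not_bisimilar {X A : Type} (tr : X → A → X → Prop)
    (h : ImageFinite tr) (x y : X) :
    Apart tr x y ↔ ¬ Bisimilar tr x y :=
  apart_iff_not_bisimilar_general tr x y
end

section
/- Let # be the apartness relation on the states of an image-finite LTS, containing exactly the pairs derivable by the apartness rule. If ¬(x # y) and x →a x', then there exists y' with y →a y' and ¬(x' # y'); that is, the complement of # satisfies the strong bisimulation transfer property. -/
theorem not_apart_transfer {X A : Type} (tr : X → A → X → Prop)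
    (h : ImageFinite tr) (x y : X) (a : A) (x' : X)
    (hxy : ¬ Apart tr x y) (hx : tr x a x') :
    ∃ y', tr y a y' ∧ ¬ Apart tr x' y' := by
  by_contra hc
  push_neg at hc
  apply hxy
  intro R hR
  exact hR.2 x y a x' hx (fun y' hy' => hc y' hy' R hR)
end

section
/- For an image-finite LTS, two states x and y are apart (x # y) if and only if Spoiler has a winning strategy from the configuration [x,y] in the strong bisimulation game. -/
/-- A step of a play that is consistent with the positional strategy `π` of the
player owning the configurations satisfying `own`. -/
def ConsStep {C : Type} (move : C → C → Prop) (own : C → Prop) (π : C → C)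
    (c c' : C) : Prop :=
  move c c' ∧ (own c → c' = π c)

/-- A positional strategy is valid if it picks an actual move whenever one exists. -/
def ValidStrat {C : Type} (move : C → C → Prop) (own : C → Prop) (π : C → C) : Prop :=
  ∀ c, own c → (∃ c', move c c') → move c (π c)

/-- `c :: l` is a maximal finite play w.r.t. the step relation `R`:
it is a chain of `R`-steps that cannot be extended. -/
def MaxFinPlay {C : Type} (R : C → C → Prop) (c : C) (l : List C) : Prop :=
  List.Chain R c l ∧ ∀ c', ¬ R ((c :: l).getLast (List.cons_ne_nil c l)) c'

/-- An infinite play from `c` consistent with the strategy. -/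
def InfPlay {C : Type} (R : C → C → Prop) (c : C) (f : ℕ → C) : Prop :=
  f 0 = c ∧ ∀ i, R (f i) (f (i + 1))

/-- The positional Spoiler strategy `π` is winning from configuration `c`:
it is valid, admits no infinite consistent play from `c` (those are won by Duplicator),
and every maximal finite consistent play from `c` ends in a (stuck) configuration
owned by Duplicator. Here `isS c` says that `c` is a Spoiler configuration. -/
def SpoilerWinsFrom {C : Type} (move : C → C → Prop) (isS : C → Prop) (π : C → C)
    (c : C) : Prop :=
  ValidStrat move isS π ∧
  (∀ f, ¬ InfPlay (ConsStep move isS π) c f) ∧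
  (∀ l, MaxFinPlay (ConsStep move isS π) c l →
      ¬ isS ((c :: l).getLast (List.cons_ne_nil c l)))

/-- The positional Duplicator strategy `ρ` is winning from configuration `c`:
it is valid and every maximal finite consistent play from `c` ends in a (stuck)
configuration owned by Spoiler; infinite plays are won by Duplicator anyway. -/
def DuplicatorWinsFrom {C : Type} (move : C → C → Prop) (isS : C → Prop) (ρ : C → C)
    (c : C) : Prop :=
  ValidStrat move (fun c => ¬ isS c) ρ ∧
  (∀ l, MaxFinPlay (ConsStep move (fun c => ¬ isS c) ρ) c l →
      isS ((c :: l).getLast (List.cons_ne_nil c l)))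

/-- The moves of an alternating two-player game with Spoiler configurations `CS`,
Duplicator configurations `CD` (the configurations are `CS ⊕ CD`), Spoiler moves
`mS` and Duplicator moves `mD`. -/
def AltMove {CS CD : Type} (mS : CS → CD → Prop) (mD : CD → CS → Prop) :
    CS ⊕ CD → CS ⊕ CD → Prop
  | Sum.inl s, Sum.inr d => mS s d
  | Sum.inr d, Sum.inl s => mD d s
  | _, _ => False

/-- Spoiler configurations of the alternating game are the left injections. -/
def AltIsS {CS CD : Type} : CS ⊕ CD → Prop := fun c => c.isLeft = true

/-- The winning region of Spoiler in the alternating game. -/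
def SpoilerRegion {CS CD : Type} (mS : CS → CD → Prop) (mD : CD → CS → Prop) :
    Set CS :=
  {s | ∃ π, SpoilerWinsFrom (AltMove mS mD) AltIsS π (Sum.inl s)}

/-- The winning region of Duplicator in the alternating game. -/
def DuplicatorRegion {CS CD : Type} (mS : CS → CD → Prop) (mD : CD → CS → Prop) :
    Set CS :=
  {s | ∃ ρ, DuplicatorWinsFrom (AltMove mS mD) AltIsS ρ (Sum.inl s)}

/-- Spoiler moves of the strong bisimulation game: from `[x,y]`, Spoiler picks a
transition `x →a x'` (moving to `⟨x,a,x',y⟩`) or `y →a y'` (moving to `⟨y,a,y',x⟩`). -/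
def SBGmS {X A : Type} (tr : X → A → X → Prop) : X × X → X × A × X × X → Prop :=
  fun p q =>
    (∃ a x', q = (p.1, a, x', p.2) ∧ tr p.1 a x') ∨
    (∃ a y', q = (p.2, a, y', p.1) ∧ tr p.2 a y')

/-- Duplicator moves of the strong bisimulation game: from `⟨x,a,x',y⟩` Duplicator
moves to `[x',y']` whenever `y →a y'`. -/
def SBGmD {X A : Type} (tr : X → A → X → Prop) : X × A × X × X → X × X → Prop :=
  fun q p => ∃ y', p = (q.2.2.1, y') ∧ tr q.2.2.2 q.2.1 y'

/-!
The configurations from which Spoiler can force Duplicator to get stuck within `n` rounds form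
the `n`-th stage of Spoiler's attractor. Always playing a move that lowers the number of rounds
still needed is one positional strategy that wins from the whole attractor. On an image-finite
LTS the attractor is an apartness relation, since Duplicator's finitely many answers are all
lost within a common number of rounds; hence apart states lie in it. Conversely, the complement
of an apartness relation is a bisimulation, inside which Duplicator can always answer, so against
any Spoiler strategy there is an infinite play from a pair outside the relation.
-/

section Plays

variable {C : Type} {move : C → C → Prop} {isS : C → Prop} {π : C → C}

theorem exists_infPlay_of_forall_exists {R : C → C → Prop} {P : C → Prop}
    (h : ∀ c, P c → ∃ c', R c c' ∧ P c') {c : C} (hc : P c) : ∃ f, InfPlay R c f := by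
  choose next hR hP using h
  let g (n : ℕ) : {c // P c} := (fun c => ⟨next c.1 c.2, hP c.1 c.2⟩)^[n] ⟨c, hc⟩
  refine ⟨fun n => (g n).1, rfl, fun n => ?_⟩
  simp only [g, Function.iterate_succ_apply']
  exact hR _ _

theorem SpoilerWinsFrom.exists_consStep {c₀ c : C} (hwin : SpoilerWinsFrom move isS π c₀)
    (hc : Relation.ReflTransGen (ConsStep move isS π) c₀ c) (hS : isS c) :
    ∃ c', ConsStep move isS π c c' := by
  by_contra! hstuck
  obtain ⟨l, hl, rfl⟩ := List.exists_isChain_cons_of_relationReflTransGen hc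
  exact hwin.2.2 l ⟨hl, hstuck⟩ hS

end Plays

section AlternatingGame

variable {CS CD : Type} (mS : CS → CD → Prop) (mD : CD → CS → Prop)

def Attractor : ℕ → CS → Prop
  | 0, _ => False
  | n + 1, s => ∃ d, mS s d ∧ ∀ s', mD d s' → Attractor n s'

/-- Holds vacuously unless `s` is in the attractor, so an optimal move exists wherever Spoiler
can move at all. -/
def IsOptimalMove (s : CS) (d : CD) : Prop :=
  mS s d ∧ ∀ n, Attractor mS mD (n + 1) s → ∀ s', mD d s' → Attractor mS mD n s'

open Classical in
noncomputable def optimalStrategy : CS ⊕ CD → CS ⊕ CD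
  | .inl s => if h : ∃ d, IsOptimalMove mS mD s d then .inr h.choose else .inl s
  | .inr d => .inr d

def InAttractor : CS ⊕ CD → Prop
  | .inl s => ∃ n, Attractor mS mD n s
  | .inr d => ∀ s, mD d s → ∃ n, Attractor mS mD n s

variable {mS mD}

theorem altMove_inl_iff {s : CS} {c : CS ⊕ CD} :
    AltMove mS mD (.inl s) c ↔ ∃ d, c = .inr d ∧ mS s d := by
  cases c <;> simp [AltMove]

theorem altMove_inr_iff {d : CD} {c : CS ⊕ CD} :
    AltMove mS mD (.inr d) c ↔ ∃ s, c = .inl s ∧ mD d s := by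
  cases c <;> simp [AltMove]

theorem Attractor.mono {m n : ℕ} (hmn : m ≤ n) {s : CS} (h : Attractor mS mD m s) :
    Attractor mS mD n s := by
  induction m generalizing n s with
  | zero => exact h.elim
  | succ m ih =>
    cases n with
    | zero => omega
    | succ n =>
      obtain ⟨d, hd, hnext⟩ := h
      exact ⟨d, hd, fun s' hs' => ih (by omega) (hnext s' hs')⟩

theorem exists_isOptimalMove {s : CS} {d : CD} (hd : mS s d) :
    ∃ d, IsOptimalMove mS mD s d := by
  classical
  by_cases hs : ∃ n, Attractor mS mD n s
  · obtain ⟨k, hk⟩ : ∃ k, Nat.find hs = k + 1 :=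
      Nat.exists_eq_succ_of_ne_zero fun h0 => by simpa [h0, Attractor] using Nat.find_spec hs
    obtain ⟨d, hd, hnext⟩ : Attractor mS mD (k + 1) s := hk ▸ Nat.find_spec hs
    refine ⟨d, hd, fun n hn s' hs' => (hnext s' hs').mono ?_⟩
    have := Nat.find_min' hs hn
    omega
  · exact ⟨d, hd, fun n hn => (hs ⟨n + 1, hn⟩).elim⟩

theorem optimalStrategy_inl {s : CS} {d : CD} (hd : mS s d) :
    ∃ d', optimalStrategy mS mD (.inl s) = .inr d' ∧ IsOptimalMove mS mD s d' := by
  have h := exists_isOptimalMove (mD := mD) hd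
  exact ⟨h.choose, by rw [optimalStrategy, dif_pos h], h.choose_spec⟩

theorem validStrat_optimalStrategy :
    ValidStrat (AltMove mS mD) AltIsS (optimalStrategy mS mD) := by
  rintro (s | d) hs ⟨c, hc⟩
  · obtain ⟨d, -, hd⟩ := altMove_inl_iff.mp hc
    obtain ⟨d', hπ, hd', -⟩ := optimalStrategy_inl (mD := mD) hd
    rw [hπ]
    exact hd'
  · simp [AltIsS] at hs

theorem consStep_optimalStrategy_inl {s : CS} {c : CS ⊕ CD}
    (h : ConsStep (AltMove mS mD) AltIsS (optimalStrategy mS mD) (.inl s) c) :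
    ∃ d, c = .inr d ∧ IsOptimalMove mS mD s d := by
  obtain ⟨d, -, hd⟩ := altMove_inl_iff.mp h.1
  obtain ⟨d', hπ, hopt⟩ := optimalStrategy_inl (mD := mD) hd
  exact ⟨d', (h.2 rfl).trans hπ, hopt⟩

theorem not_infPlay_optimalStrategy {n : ℕ} {s : CS} (hs : Attractor mS mD n s)
    (f : ℕ → CS ⊕ CD) :
    ¬ InfPlay (ConsStep (AltMove mS mD) AltIsS (optimalStrategy mS mD)) (.inl s) f := by
  induction n generalizing s f with
  | zero => exact hs.elim
  | succ n ih =>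
    rintro ⟨hf0, hf⟩
    obtain ⟨d, hf1, -, hopt⟩ := consStep_optimalStrategy_inl (hf0 ▸ hf 0)
    obtain ⟨s', hf2, hs'⟩ := altMove_inr_iff.mp (hf1 ▸ (hf 1).1)
    exact ih (hopt n hs s' hs') (fun i => f (i + 2)) ⟨hf2, fun i => hf (i + 2)⟩

theorem InAttractor.of_consStep {c c' : CS ⊕ CD} (hc : InAttractor mS mD c)
    (h : ConsStep (AltMove mS mD) AltIsS (optimalStrategy mS mD) c c') :
    InAttractor mS mD c' := by
  cases c with
  | inl s =>
    obtain ⟨d, rfl, -, hopt⟩ := consStep_optimalStrategy_inl h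
    obtain ⟨n, hn⟩ := hc
    intro s' hs'
    cases n with
    | zero => exact hn.elim
    | succ n => exact ⟨n, hopt n hn s' hs'⟩
  | inr d =>
    obtain ⟨s', rfl, hs'⟩ := altMove_inr_iff.mp h.1
    exact hc s' hs'

theorem InAttractor.consStep_optimalStrategy {c : CS ⊕ CD} (hc : InAttractor mS mD c)
    (hS : AltIsS c) :
    ConsStep (AltMove mS mD) AltIsS (optimalStrategy mS mD) c (optimalStrategy mS mD c) := by
  refine ⟨?_, fun _ => rfl⟩
  cases c with
  | inl s =>
    obtain ⟨_ | n, hn⟩ := hc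
    · exact hn.elim
    obtain ⟨d, hd, -⟩ := hn
    exact validStrat_optimalStrategy _ hS ⟨.inr d, hd⟩
  | inr d => simp [AltIsS] at hS

theorem not_altIsS_last_of_maxFinPlay {n : ℕ} {s : CS} (hs : Attractor mS mD n s)
    {l : List (CS ⊕ CD)}
    (hl : MaxFinPlay (ConsStep (AltMove mS mD) AltIsS (optimalStrategy mS mD)) (.inl s) l) :
    ¬ AltIsS ((.inl s :: l).getLast (List.cons_ne_nil _ l)) := by
  have hlast : InAttractor mS mD ((.inl s :: l).getLast (List.cons_ne_nil _ l)) :=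
    hl.1.induction _ _ (fun _ _ => flip InAttractor.of_consStep) (fun _ => ⟨n, hs⟩) _
      (List.getLast_mem _)
  exact fun hS => hl.2 _ (hlast.consStep_optimalStrategy hS)

theorem mem_spoilerRegion_of_attractor {n : ℕ} {s : CS} (hs : Attractor mS mD n s) :
    s ∈ SpoilerRegion mS mD :=
  ⟨optimalStrategy mS mD, validStrat_optimalStrategy,
    fun f => not_infPlay_optimalStrategy hs f, fun _ hl => not_altIsS_last_of_maxFinPlay hs hl⟩

theorem notMem_of_mem_spoilerRegion {T : Set CS} (hT : ∀ s ∈ T, ∀ d, mS s d → ∃ s' ∈ T, mD d s')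
    {s : CS} (hs : s ∈ SpoilerRegion mS mD) : s ∉ T := by
  obtain ⟨π, hwin⟩ := hs
  intro hsT
  set S := ConsStep (AltMove mS mD) AltIsS π
  let Safe : CS ⊕ CD → Prop := Sum.elim (· ∈ T) fun d => ∃ s' ∈ T, mD d s'
  have hnext : ∀ c, Relation.ReflTransGen S (.inl s) c ∧ Safe c →
      ∃ c', S c c' ∧ Relation.ReflTransGen S (.inl s) c' ∧ Safe c' := by
    rintro c ⟨hreach, hc⟩
    suffices ∃ c', S c c' ∧ Safe c' from
      let ⟨c', hstep, hc'⟩ := this; ⟨c', hstep, hreach.tail hstep, hc'⟩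
    cases c with
    | inl s₀ =>
      obtain ⟨c', hstep⟩ := hwin.exists_consStep hreach rfl
      obtain ⟨d, rfl, hd⟩ := altMove_inl_iff.mp hstep.1
      exact ⟨_, hstep, hT s₀ hc d hd⟩
    | inr d =>
      obtain ⟨s', hs'T, hds'⟩ := hc
      exact ⟨.inl s', ⟨hds', fun h => by simp [AltIsS] at h⟩, hs'T⟩
  obtain ⟨f, hf⟩ := exists_infPlay_of_forall_exists hnext ⟨.refl, hsT⟩
  exact hwin.2.1 f hf

end AlternatingGame

section StrongBisimulationGame

variable {X A : Type} {tr : X → A → X → Prop}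

theorem sbgmS_swap (p : X × X) : SBGmS tr p.swap = SBGmS tr p := by
  funext q
  exact propext Or.comm

theorem attractor_sbg_swap {n : ℕ} {p : X × X} (h : Attractor (SBGmS tr) (SBGmD tr) n p) :
    Attractor (SBGmS tr) (SBGmD tr) n p.swap := by
  cases n with
  | zero => exact h.elim
  | succ n =>
    obtain ⟨d, hd, hnext⟩ := h
    exact ⟨d, by rwa [sbgmS_swap], hnext⟩

theorem isApartnessRel_attractor_sbg (h : ImageFinite tr) :
    IsApartnessRel tr fun x y => ∃ n, Attractor (SBGmS tr) (SBGmD tr) n (x, y) := by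
  refine ⟨fun x y ⟨n, hn⟩ => ⟨n, attractor_sbg_swap hn⟩, fun x y a x' hx' hy => ?_⟩
  have hev : ∀ᶠ N in Filter.atTop, ∀ y' ∈ {y' | tr y a y'},
      Attractor (SBGmS tr) (SBGmD tr) N (x', y') :=
    (h y a).eventually_all.2 fun y' hy' =>
      let ⟨n, hn⟩ := hy y' hy'
      Filter.eventually_atTop.2 ⟨n, fun _ hm => hn.mono hm⟩
  obtain ⟨N, hN⟩ := hev.exists
  refine ⟨N + 1, (x, a, x', y), Or.inl ⟨a, x', rfl, hx'⟩, ?_⟩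
  rintro _ ⟨y', rfl, hy'⟩
  exact hN y' hy'

theorem IsApartnessRel.isBisimulation_compl {R : X → X → Prop} (hR : IsApartnessRel tr R) :
    IsBisimulation tr fun x y => ¬ R x y := by
  refine ⟨fun x y hxy hyx => hxy (hR.1 hyx), fun x y hxy a x' hx' => ?_⟩
  by_contra! hall
  exact hxy (hR.2 x y a x' hx' hall)

theorem IsBisimulation.exists_sbgmD {B : X → X → Prop} (hB : IsBisimulation tr B)
    {p : X × X} (hp : B p.1 p.2) {d : X × A × X × X} (hd : SBGmS tr p d) :
    ∃ p', B p'.1 p'.2 ∧ SBGmD tr d p' := by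
  obtain ⟨a, x', rfl, hx'⟩ | ⟨a, y', rfl, hy'⟩ := hd
  · obtain ⟨y', hy', hB'⟩ := hB.2 _ _ hp a x' hx'
    exact ⟨(x', y'), hB', y', rfl, hy'⟩
  · obtain ⟨x', hx', hB'⟩ := hB.2 _ _ (hB.1 hp) a y' hy'
    exact ⟨(y', x'), hB', x', rfl, hx'⟩

end StrongBisimulationGame

/-- Two states of an image-finite LTS are apart iff Spoiler has a winning strategy
from `[x,y]` in the strong bisimulation game. -/
theorem apart_iff_spoiler_wins {X A : Type} (tr : X → A → X → Prop)
    (h : ImageFinite tr) (x y : X) :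
    Apart tr x y ↔ (x, y) ∈ SpoilerRegion (SBGmS tr) (SBGmD tr) := by
  constructor
  · intro hxy
    obtain ⟨n, hn⟩ := hxy _ (isApartnessRel_attractor_sbg h)
    exact mem_spoilerRegion_of_attractor hn
  · intro hwin R hR
    by_contra hxy
    exact notMem_of_mem_spoilerRegion (T := {p : X × X | ¬ R p.1 p.2})
      (fun _ hp _ hd => hR.isBisimulation_compl.exists_sbgmD hp hd) hwin hxy
end

section
/- Branching bisimilarity, defined as the union of all branching bisimulations, is itself a branching bisimulation. -/
/-- `x ⟹ x'`: a (possibly empty) sequence of `τ`-steps from `x` to `x'`. -/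
def TauStar {X A : Type} (tr : X → A → X → Prop) (τ : A) : X → X → Prop :=
  Relation.ReflTransGen (fun u v => tr u τ v)

/-- `x →(α) x'`: either `x →α x'`, or `α = τ` and `x = x'`. -/
def TrOpt {X A : Type} (tr : X → A → X → Prop) (τ : A) (x : X) (α : A) (x' : X) : Prop :=
  tr x α x' ∨ (α = τ ∧ x = x')

/-- A symmetric relation `R` is a branching bisimulation. -/
def IsBranchingBisim {X A : Type} (tr : X → A → X → Prop) (τ : A)
    (R : X → X → Prop) : Prop :=
  Symmetric R ∧ ∀ x y, R x y → ∀ α x', tr x α x' →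
    ∃ y' y'', TauStar tr τ y y' ∧ TrOpt tr τ y' α y'' ∧ R x y' ∧ R x' y''

/-- Branching bisimilarity: the union of all branching bisimulations. -/
def BranchingBisimilar {X A : Type} (tr : X → A → X → Prop) (τ : A) (x y : X) : Prop :=
  ∃ R, IsBranchingBisim tr τ R ∧ R x y

/-- A symmetric relation `R` is a branching apartness relation. -/
def IsBranchingApartnessRel {X A : Type} (tr : X → A → X → Prop) (τ : A)
    (R : X → X → Prop) : Prop :=
  Symmetric R ∧ ∀ x y α x', tr x α x' →
    (∀ y' y'', TauStar tr τ y y' → TrOpt tr τ y' α y'' → (R x y' ∨ R x' y'')) →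
    R x y

/-- Branching apartness: the intersection of all branching apartness relations. -/
def BranchingApart {X A : Type} (tr : X → A → X → Prop) (τ : A) (x y : X) : Prop :=
  ∀ R, IsBranchingApartnessRel tr τ R → R x y

theorem isBranchingBisim_sUnion {X A : Type} {tr : X → A → X → Prop} {τ : A}
    {S : Set (X → X → Prop)} (hS : ∀ R ∈ S, IsBranchingBisim tr τ R) :
    IsBranchingBisim tr τ (fun x y => ∃ R ∈ S, R x y) := by
  refine ⟨fun x y ⟨R, hRS, hxy⟩ => ⟨R, hRS, (hS R hRS).1 hxy⟩, ?_⟩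
  rintro x y ⟨R, hRS, hxy⟩ α x' hstep
  obtain ⟨y', y'', hτ, hα, hxy', hxy''⟩ := (hS R hRS).2 x y hxy α x' hstep
  exact ⟨y', y'', hτ, hα, ⟨R, hRS, hxy'⟩, ⟨R, hRS, hxy''⟩⟩

/-- Branching bisimilarity is itself a branching bisimulation. -/
theorem branchingBisimilar_isBranchingBisim {X A : Type}
    (tr : X → A → X → Prop) (τ : A) :
    IsBranchingBisim tr τ (BranchingBisimilar tr τ) :=
  isBranchingBisim_sUnion (S := {R | IsBranchingBisim tr τ R}) fun _ hR => hR
end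

section
/- For a finite LTS with silent actions, the branching apartness relation #_b is the complement of branching bisimilarity: x #_b y if and only if x and y are not branching bisimilar. -/
/-!
Taking complements exchanges the two notions: the complement of a branching bisimulation is a
branching apartness relation, and (classically) the complement of a branching apartness relation
is a branching bisimulation, the apartness rule being the contrapositive of the transfer
condition. Hence the least apartness relation is the complement of the greatest bisimulation.
-/

section

variable {X A : Type} {tr : X → A → X → Prop} {τ : A}

theorem IsBranchingBisim.isBranchingApartnessRel_compl {R : X → X → Prop}
    (hR : IsBranchingBisim tr τ R) :
    IsBranchingApartnessRel tr τ (fun a b => ¬ R a b) := by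
  refine ⟨fun a b hab hba => hab (hR.1 hba), ?_⟩
  intro a b α a' ha hcl hab
  obtain ⟨b', b'', hτ, hα, hab', hab''⟩ := hR.2 a b hab α a' ha
  exact (hcl b' b'' hτ hα).elim (· hab') (· hab'')

theorem IsBranchingApartnessRel.isBranchingBisim_compl {S : X → X → Prop}
    (hS : IsBranchingApartnessRel tr τ S) :
    IsBranchingBisim tr τ (fun a b => ¬ S a b) := by
  refine ⟨fun a b hab hba => hab (hS.1 hba), ?_⟩
  intro a b hab α a' ha
  by_contra! hno
  exact hab (hS.2 a b α a' ha fun b' b'' hτ hα => or_iff_not_imp_left.2 (hno b' b'' hτ hα))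

theorem isBranchingApartnessRel_branchingApart :
    IsBranchingApartnessRel tr τ (BranchingApart tr τ) := by
  refine ⟨fun a b hab R hR => hR.1 (hab R hR), ?_⟩
  intro a b α a' ha hcl R hR
  exact hR.2 a b α a' ha fun b' b'' hτ hα => (hcl b' b'' hτ hα).imp (· R hR) (· R hR)

end

theorem branchingApart_iff_not_branchingBisimilar_general {X A : Type}
    (tr : X → A → X → Prop) (τ : A) (x y : X) :
    BranchingApart tr τ x y ↔ ¬ BranchingBisimilar tr τ x y := by
  constructor
  · rintro hapart ⟨R, hR, hxy⟩
    exact hapart _ hR.isBranchingApartnessRel_compl hxy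
  · intro hnbisim
    by_contra hnapart
    exact hnbisim ⟨_, isBranchingApartnessRel_branchingApart.isBranchingBisim_compl, hnapart⟩

/-- For a finite LTS, branching apartness is the complement of branching bisimilarity. -/
theorem branchingApart_iff_not_branchingBisimilar {X A : Type} [Finite X]
    (tr : X → A → X → Prop) (τ : A) (x y : X) :
    BranchingApart tr τ x y ↔ ¬ BranchingBisimilar tr τ x y :=
  branchingApart_iff_not_branchingBisimilar_general tr τ x y
end

section
/- If x and y are branching apart (x #_b y) in a finite LTS, then Spoiler has a winning strategy from configuration [x,y] in the branching bisimulation game. -/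
/-- Configurations of the branching bisimulation game: Spoiler configurations are
pairs `[x,y]` and quintuples `[x,x',y,y',y'']`; Duplicator configurations are
tuples `⟨x,α,x',y⟩`. -/
inductive BConf (X A : Type) where
  | pair : X → X → BConf X A
  | quint : X → X → X → X → X → BConf X A
  | dup : X → A → X → X → BConf X A

/-- Spoiler owns the pair and quintuple configurations. -/
def BIsS {X A : Type} : BConf X A → Prop
  | BConf.dup _ _ _ _ => False
  | _ => True

/-- Moves of the branching bisimulation game. -/
inductive BMove {X A : Type} (tr : X → A → X → Prop) (τ : A) :
    BConf X A → BConf X A → Prop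
  | s1l {x y α x'} : tr x α x' → BMove tr τ (BConf.pair x y) (BConf.dup x α x' y)
  | s1r {x y α y'} : tr y α y' → BMove tr τ (BConf.pair x y) (BConf.dup y α y' x)
  | s2a {x x' y y' y''} : BMove tr τ (BConf.quint x x' y y' y'') (BConf.pair x y')
  | s2b {x x' y y' y''} : BMove tr τ (BConf.quint x x' y y' y'') (BConf.pair x' y'')
  | d {x α x' y y' y''} : TauStar tr τ y y' → TrOpt tr τ y' α y'' →
      BMove tr τ (BConf.dup x α x' y) (BConf.quint x x' y y' y'')

/-- The winning region of Spoiler in the branching bisimulation game, restricted to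
pair configurations. -/
def BSpoilerRegion {X A : Type} (tr : X → A → X → Prop) (τ : A) : Set (X × X) :=
  {p | ∃ π, SpoilerWinsFrom (BMove tr τ) BIsS π (BConf.pair p.1 p.2)}

/-!
Branching apartness is the least fixed point of its derivation rule, so on a finite LTS it is
reached by the finite stages `ApartN n`: `x` and `y` are apart at stage `n + 1` if one of them
has a transition that every Duplicator answer of the other leads to a pair apart at stage `n`.
The least such stage is the rank of a pair. From `[x,y]` Spoiler plays the transition witnessing
its rank, so that every Duplicator answer leads to a quintuple containing an apart pair of smaller
rank, and there he continues with the pair of least rank. The rank thus strictly decreases every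
round, so every play is finite, and Spoiler, always standing on an apart pair, is never stuck.
-/

section ProgressStrategy

variable {C : Type} {β : Type*} [Preorder β]
  (move : C → C → Prop) (isS : C → Prop) (P : C → Prop) (μ : C → β)

structure IsSpoilerRanking : Prop where
  spoiler : ∀ c, isS c → P c → ∃ d, move c d ∧ P d ∧ μ d < μ c
  duplicator : ∀ c d, ¬ isS c → P c → move c d → P d ∧ μ d < μ c

open Classical in
noncomputable def progressStrategy (c : C) : C :=
  if h : ∃ d, move c d ∧ P d ∧ μ d < μ c then h.choose
  else if h' : ∃ d, move c d then h'.choose else c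

theorem validStrat_progressStrategy (own : C → Prop) :
    ValidStrat move own (progressStrategy move P μ) := by
  rintro c - ⟨d, hd⟩
  unfold progressStrategy
  split_ifs with h h'
  · exact h.choose_spec.1
  · exact h'.choose_spec
  · exact absurd ⟨d, hd⟩ h'

theorem progressStrategy_spec {c : C} (h : ∃ d, move c d ∧ P d ∧ μ d < μ c) :
    move c (progressStrategy move P μ c) ∧ P (progressStrategy move P μ c) ∧
      μ (progressStrategy move P μ c) < μ c := by
  rw [progressStrategy, dif_pos h]
  exact h.choose_spec

variable {move isS P μ}

theorem IsSpoilerRanking.consStep (hR : IsSpoilerRanking move isS P μ) {c d : C} (hc : P c)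
    (hcd : ConsStep move isS (progressStrategy move P μ) c d) : P d ∧ μ d < μ c := by
  by_cases hS : isS c
  · rw [hcd.2 hS]
    exact (progressStrategy_spec move P μ (hR.spoiler c hS hc)).2
  · exact hR.duplicator c d hS hc hcd.1

theorem IsSpoilerRanking.spoilerWinsFrom [WellFoundedLT β]
    (hR : IsSpoilerRanking move isS P μ) {c : C} (hc : P c) :
    SpoilerWinsFrom move isS (progressStrategy move P μ) c := by
  refine ⟨validStrat_progressStrategy move P μ isS, ?_, ?_⟩
  · rintro f ⟨rfl, hf⟩
    have hP : ∀ i, P (f i) := Nat.rec hc fun i ih => (hR.consStep ih (hf i)).1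
    exact not_strictAnti_of_wellFoundedLT (μ ∘ f)
      (strictAnti_nat_of_succ_lt fun i => (hR.consStep (hP i) (hf i)).2)
  · rintro l ⟨hl, hstuck⟩ hS
    have hreach : ∀ e, Relation.ReflTransGen (ConsStep move isS (progressStrategy move P μ)) c e →
        P e := by
      intro e he
      induction he with
      | refl => exact hc
      | tail _ hstep ih => exact (hR.consStep ih hstep).1
    have hlast := hreach _ (List.relationReflTransGen_of_exists_isChain_cons l hl rfl)
    exact hstuck _ ⟨(progressStrategy_spec move P μ (hR.spoiler _ hS hlast)).1, fun _ => rfl⟩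

end ProgressStrategy

section Apartness

variable {X A : Type} (tr : X → A → X → Prop) (τ : A)

def ApartStep (R : X → X → Prop) (x y : X) : Prop :=
  ∃ α x', tr x α x' ∧ ∀ y' y'', TauStar tr τ y y' → TrOpt tr τ y' α y'' → R x y' ∨ R x' y''

def ApartN : ℕ → X → X → Prop
  | 0, _, _ => False
  | n + 1, x, y => ApartStep tr τ (ApartN n) x y ∨ ApartStep tr τ (ApartN n) y x

variable {tr τ}

theorem ApartStep.mono {R S : X → X → Prop} (hRS : ∀ x y, R x y → S x y) {x y : X}
    (h : ApartStep tr τ R x y) : ApartStep tr τ S x y :=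
  let ⟨α, x', hx, H⟩ := h
  ⟨α, x', hx, fun y' y'' h₁ h₂ => (H y' y'' h₁ h₂).imp (hRS _ _) (hRS _ _)⟩

theorem apartN_comm {n : ℕ} {x y : X} : ApartN tr τ n x y ↔ ApartN tr τ n y x := by
  cases n
  · exact Iff.rfl
  · exact Or.comm

theorem ApartN.succ {n : ℕ} {x y : X} (h : ApartN tr τ n x y) : ApartN tr τ (n + 1) x y := by
  induction n generalizing x y with
  | zero => exact h.elim
  | succ n ih => exact h.imp (.mono fun _ _ => ih) (.mono fun _ _ => ih)

theorem ApartN.of_le {m n : ℕ} (hmn : m ≤ n) {x y : X} (h : ApartN tr τ m x y) :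
    ApartN tr τ n x y := by
  induction n, hmn using Nat.le_induction with
  | base => exact h
  | succ n _ ih => exact ih.succ

theorem exists_apartN_saturated [Finite X] :
    ∃ N, ∀ n (x y : X), ApartN tr τ n x y → ApartN tr τ N x y := by
  have : ∀ p : X × X, ∃ m, ∀ n, ApartN tr τ n p.1 p.2 → ApartN tr τ m p.1 p.2 := by
    intro p
    by_cases h : ∃ m, ApartN tr τ m p.1 p.2
    · obtain ⟨m, hm⟩ := h
      exact ⟨m, fun _ _ => hm⟩
    · exact ⟨0, fun n hn => (h ⟨n, hn⟩).elim⟩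
  choose m hm using this
  obtain ⟨N, hN⟩ := Finite.exists_le m
  exact ⟨N, fun n x y h => (hm (x, y) n h).of_le (hN (x, y))⟩

theorem isBranchingApartnessRel_exists_apartN [Finite X] :
    IsBranchingApartnessRel tr τ fun x y => ∃ n, ApartN tr τ n x y := by
  obtain ⟨N, hN⟩ := exists_apartN_saturated (tr := tr) (τ := τ)
  refine ⟨fun x y ⟨n, h⟩ => ⟨n, apartN_comm.mp h⟩, fun x y α x' hx H => ⟨N + 1, .inl ?_⟩⟩
  exact ⟨α, x', hx, fun y' y'' h₁ h₂ =>
    (H y' y'' h₁ h₂).imp (fun ⟨n, h⟩ => hN n _ _ h) (fun ⟨n, h⟩ => hN n _ _ h)⟩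

theorem BranchingApart.exists_apartN [Finite X] {x y : X} (h : BranchingApart tr τ x y) :
    ∃ n, ApartN tr τ n x y :=
  h _ isBranchingApartnessRel_exists_apartN

variable (tr τ)

noncomputable def apartRank (x y : X) : ℕ∞ :=
  sInf ((↑) '' {n | ApartN tr τ n x y})

variable {tr τ}

theorem apartRank_le {n : ℕ} {x y : X} (h : ApartN tr τ n x y) : apartRank tr τ x y ≤ n :=
  sInf_le ⟨n, h, rfl⟩

theorem ApartN.of_apartRank_eq {n : ℕ} {x y : X} (h : apartRank tr τ x y = n) :
    ApartN tr τ n x y := by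
  have hne : ((↑) '' {n | ApartN tr τ n x y} : Set ℕ∞).Nonempty := by
    rw [Set.nonempty_iff_ne_empty]
    intro he
    simp [apartRank, he] at h
  obtain ⟨m, hm, hmn⟩ := csInf_mem hne
  rwa [← Nat.cast_inj.mp (hmn.trans h)]

theorem apartRank_comm (x y : X) : apartRank tr τ x y = apartRank tr τ y x := by
  simp only [apartRank, apartN_comm]

end Apartness

section Game

open Prod.Lex (toLex_lt_toLex)

variable {X A : Type} (tr : X → A → X → Prop) (τ : A)

/-- Along the strategy, the move from `[a,b]` keeps the rank, a Duplicator answer lowers it, and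
the move from a quintuple keeps it; the second component makes each move decrease. -/
noncomputable def gameRank : BConf X A → ℕ∞ ×ₗ ℕ
  | .pair a b => toLex (apartRank tr τ a b, 1)
  | .dup a _ _ b => toLex (apartRank tr τ a b, 0)
  | .quint a a' _ b' b'' => toLex (min (apartRank tr τ a b') (apartRank tr τ a' b''), 2)

def GameInv : BConf X A → Prop
  | .pair a b => apartRank tr τ a b < ⊤
  | .dup a α a' b => ∀ b' b'', TauStar tr τ b b' → TrOpt tr τ b' α b'' →
      min (apartRank tr τ a b') (apartRank tr τ a' b'') < apartRank tr τ a b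
  | .quint a a' _ b' b'' => min (apartRank tr τ a b') (apartRank tr τ a' b'') < ⊤

variable {tr τ}

theorem GameInv.dup_of_apartStep {n : ℕ} {a b : X} (hab : apartRank tr τ a b = ↑(n + 1))
    {α : A} {a' : X} (H : ∀ b' b'', TauStar tr τ b b' → TrOpt tr τ b' α b'' →
      ApartN tr τ n a b' ∨ ApartN tr τ n a' b'') :
    GameInv tr τ (.dup a α a' b) := by
  intro b' b'' h₁ h₂
  rw [hab]
  refine lt_of_le_of_lt ?_ (Nat.cast_lt.mpr n.lt_succ_self)
  rcases H b' b'' h₁ h₂ with h | h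
  · exact min_le_of_left_le (apartRank_le h)
  · exact min_le_of_right_le (apartRank_le h)

theorem exists_progress_of_apartRank_lt_top {a b : X} (hab : apartRank tr τ a b < ⊤) :
    ∃ d, BMove tr τ (.pair a b) d ∧ GameInv tr τ d ∧
      gameRank tr τ d < gameRank tr τ (.pair a b) := by
  obtain ⟨n, hn⟩ := ENat.ne_top_iff_exists.mp hab.ne
  cases n with
  | zero => exact (ApartN.of_apartRank_eq hn.symm).elim
  | succ n =>
    rcases ApartN.of_apartRank_eq hn.symm with ⟨α, a', ha, H⟩ | ⟨α, b', hb, H⟩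
    · exact ⟨_, .s1l ha, .dup_of_apartStep hn.symm H, by simp [gameRank, toLex_lt_toLex]⟩
    · refine ⟨_, .s1r hb, .dup_of_apartStep ((apartRank_comm b a).trans hn.symm) H, ?_⟩
      simp [gameRank, toLex_lt_toLex, apartRank_comm b a]

theorem isSpoilerRanking_gameInv :
    IsSpoilerRanking (BMove tr τ) BIsS (GameInv tr τ) (gameRank tr τ) := by
  constructor
  · rintro (⟨a, b⟩ | ⟨a, a', b, b', b''⟩ | ⟨⟩) hS hc
    · exact exists_progress_of_apartRank_lt_top hc
    · rcases le_total (apartRank tr τ a b') (apartRank tr τ a' b'') with h | h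
      · exact ⟨_, .s2a, by simpa [GameInv, h] using hc, by simp [gameRank, toLex_lt_toLex, h]⟩
      · exact ⟨_, .s2b, by simpa [GameInv, h] using hc, by simp [gameRank, toLex_lt_toLex, h]⟩
    · exact hS.elim
  · rintro c d hS hc hcd
    cases hcd with
    | d h₁ h₂ =>
      have hlt := hc _ _ h₁ h₂
      exact ⟨hlt.trans_le le_top, by simp [gameRank, toLex_lt_toLex, hlt]⟩
    | _ => exact (hS trivial).elim

end Game

/-- If `x` and `y` are branching apart in a finite LTS, then Spoiler has a winning
strategy from `[x,y]` in the branching bisimulation game. -/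
theorem branchingApart_spoiler_wins {X A : Type} [Finite X]
    (tr : X → A → X → Prop) (τ : A) (x y : X)
    (h : BranchingApart tr τ x y) :
    (x, y) ∈ BSpoilerRegion tr τ := by
  obtain ⟨n, hn⟩ := h.exists_apartN
  exact ⟨_, isSpoilerRanking_gameInv.spoilerWinsFrom
    ((apartRank_le hn).trans_lt (ENat.natCast_lt_top n))⟩
end

section
/- For a finite LTS, x and y are branching apart if and only if [x,y] is winning for Spoiler in the branching bisimulation game. -/
/-!
Stratify Spoiler's winning configurations by attractor levels: a configuration is won within
`n + 1` rounds if Spoiler has a move to, or Duplicator has only moves to, configurations won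
within `n` rounds. Spoiler wins from every level by always moving one level down. On pairs,
the levels form a branching apartness relation (Duplicator has finitely many answers, so they
share a common level), hence contain branching apartness. Conversely, for any branching
apartness relation `R`, Duplicator can keep the pairs of the play outside `R` forever, so a
Spoiler win from `[x,y]` forces `R x y`.
-/

section Game

variable {C : Type} (move : C → C → Prop) (isS : C → Prop)

/-- `SpoilerAttr move isS n c`: Spoiler can force the play from `c` into a configuration where
Duplicator is stuck within `n` rounds. -/
def SpoilerAttr : ℕ → C → Prop
  | 0, _ => False
  | n + 1, c => SpoilerAttr n c ∨ (isS c ∧ ∃ c', move c c' ∧ SpoilerAttr n c') ∨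
      (¬ isS c ∧ ∀ c', move c c' → SpoilerAttr n c')

variable {move isS}

theorem SpoilerAttr.succ_of_move {n : ℕ} {c c' : C} (hc : isS c) (hmove : move c c')
    (h : SpoilerAttr move isS n c') : SpoilerAttr move isS (n + 1) c :=
  Or.inr (Or.inl ⟨hc, c', hmove, h⟩)

theorem SpoilerAttr.succ_of_forall {n : ℕ} {c : C} (hc : ¬ isS c)
    (h : ∀ c', move c c' → SpoilerAttr move isS n c') : SpoilerAttr move isS (n + 1) c :=
  Or.inr (Or.inr ⟨hc, h⟩)

theorem spoilerAttr_monotone : Monotone (SpoilerAttr move isS) :=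
  monotone_nat_of_le_succ fun _ _ => Or.inl

theorem SpoilerAttr.eventually {n : ℕ} {c : C} (h : SpoilerAttr move isS n c) :
    ∀ᶠ m in Filter.atTop, SpoilerAttr move isS m c :=
  Filter.eventually_atTop.2 ⟨n, fun _ hm => spoilerAttr_monotone hm c h⟩

theorem spoilerAttr_congr {c d : C} (hS : isS c ↔ isS d) (hmove : ∀ e, move c e ↔ move d e) :
    ∀ n, SpoilerAttr move isS n c ↔ SpoilerAttr move isS n d
  | 0 => Iff.rfl
  | n + 1 => by
    simp only [SpoilerAttr, spoilerAttr_congr hS hmove n, hS, hmove]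

variable (move isS)

/-- Junk value `0` when Spoiler cannot win from `c`. -/
noncomputable def spoilerAttrRank (c : C) : ℕ := sInf {n | SpoilerAttr move isS n c}

open Classical in
noncomputable def spoilerAttrStrategy (c : C) : C :=
  if h : ∃ c', move c c' ∧ SpoilerAttr move isS (spoilerAttrRank move isS c - 1) c' then h.choose
  else if h : ∃ c', move c c' then h.choose else c

variable {move isS}

theorem validStrat_spoilerAttrStrategy : ValidStrat move isS (spoilerAttrStrategy move isS) := by
  intro c _ hex
  unfold spoilerAttrStrategy
  split_ifs with h
  · exact h.choose_spec.1
  · exact hex.choose_spec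

theorem SpoilerAttr.exists_rank_eq_succ {n : ℕ} {c : C} (h : SpoilerAttr move isS n c) :
    ∃ k, spoilerAttrRank move isS c = k + 1 ∧
      ((isS c ∧ ∃ c', move c c' ∧ SpoilerAttr move isS k c') ∨
        (¬ isS c ∧ ∀ c', move c c' → SpoilerAttr move isS k c')) := by
  have hrank : SpoilerAttr move isS (spoilerAttrRank move isS c) c :=
    Nat.sInf_mem (s := {m | SpoilerAttr move isS m c}) ⟨n, h⟩
  obtain ⟨k, hk⟩ : ∃ k, spoilerAttrRank move isS c = k + 1 :=
    Nat.exists_eq_add_one.2 (Nat.pos_of_ne_zero fun h0 => by rw [h0] at hrank; exact hrank)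
  rw [hk] at hrank
  refine ⟨k, hk, hrank.resolve_left fun hlow => ?_⟩
  exact Nat.notMem_of_lt_sInf (show k < spoilerAttrRank move isS c by omega) hlow

theorem SpoilerAttr.spoilerAttrStrategy_move {n : ℕ} {c : C} (h : SpoilerAttr move isS n c)
    (hc : isS c) : move c (spoilerAttrStrategy move isS c) := by
  obtain ⟨k, -, ⟨-, c', hmove, -⟩ | ⟨hnc, -⟩⟩ := h.exists_rank_eq_succ
  · exact validStrat_spoilerAttrStrategy c hc ⟨c', hmove⟩
  · exact absurd hc hnc

theorem SpoilerAttr.consStep {n : ℕ} {c c' : C} (h : SpoilerAttr move isS n c)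
    (hstep : ConsStep move isS (spoilerAttrStrategy move isS) c c') :
    SpoilerAttr move isS (spoilerAttrRank move isS c - 1) c' ∧
      spoilerAttrRank move isS c' < spoilerAttrRank move isS c := by
  obtain ⟨k, hk, hwin⟩ := h.exists_rank_eq_succ
  have hc' : SpoilerAttr move isS k c' := by
    rcases hwin with ⟨hc, hex⟩ | ⟨-, hall⟩
    · have hex' : ∃ c', move c c' ∧ SpoilerAttr move isS (spoilerAttrRank move isS c - 1) c' := by
        rwa [hk]
      rw [hstep.2 hc, spoilerAttrStrategy, dif_pos hex']
      simpa [hk] using hex'.choose_spec.2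
    · exact hall c' hstep.1
  refine ⟨by rwa [hk], ?_⟩
  exact lt_of_le_of_lt (Nat.sInf_le hc') (by omega)

theorem spoilerWinsFrom_spoilerAttrStrategy {n : ℕ} {c : C} (h : SpoilerAttr move isS n c) :
    SpoilerWinsFrom move isS (spoilerAttrStrategy move isS) c := by
  set S := ConsStep move isS (spoilerAttrStrategy move isS)
  have hreach : ∀ {c'}, Relation.ReflTransGen S c c' → ∃ n, SpoilerAttr move isS n c' := by
    intro c' hc'
    induction hc' with
    | refl => exact ⟨n, h⟩
    | tail _ hstep ih => exact ⟨_, (ih.choose_spec.consStep hstep).1⟩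
  refine ⟨validStrat_spoilerAttrStrategy, ?_, ?_⟩
  · rintro f ⟨hf0, hf⟩
    have hreach_f : ∀ i, Relation.ReflTransGen S c (f i) := by
      intro i
      induction i with
      | zero => rw [hf0]
      | succ i ih => exact ih.tail (hf i)
    obtain ⟨i, hi⟩ := WellFounded.not_rel_apply_succ (r := (· < ·))
      fun i => spoilerAttrRank move isS (f i)
    exact hi ((hreach (hreach_f i)).choose_spec.consStep (hf i)).2
  · rintro l ⟨hchain, hstuck⟩ hS
    obtain ⟨m, hm⟩ := hreach (List.relationReflTransGen_of_exists_isChain_cons l hchain rfl)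
    exact hstuck _ ⟨hm.spoilerAttrStrategy_move hS, fun _ => rfl⟩

theorem not_spoilerWinsFrom_of_trap {π : C → C} {c : C} (G : C → Prop) (hc : G c)
    (hS : ∀ c c', isS c → G c → move c c' → G c')
    (hD : ∀ c, ¬ isS c → G c → ∃ c', move c c' ∧ G c') :
    ¬ SpoilerWinsFrom move isS π c := by
  rintro ⟨-, hinf, hmax⟩
  set S := ConsStep move isS π
  let P : C → Prop := fun d => Relation.ReflTransGen S c d ∧ G d
  have hnext : ∀ d, P d → ∃ d', S d d' ∧ P d' := by
    rintro d ⟨hreach, hd⟩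
    by_cases hdS : isS d
    · by_contra! hno
      obtain ⟨l, hchain, hlast⟩ := List.exists_isChain_cons_of_relationReflTransGen hreach
      refine hmax l ⟨hchain, fun d' hd' => ?_⟩ (hlast ▸ hdS)
      rw [hlast] at hd'
      exact hno d' hd' ⟨hreach.tail hd', hS d d' hdS hd hd'.1⟩
    · obtain ⟨d', hmove, hd'⟩ := hD d hdS hd
      have hstep : S d d' := ⟨hmove, fun h => absurd h hdS⟩
      exact ⟨d', hstep, hreach.tail hstep, hd'⟩
  choose next hnext_step hnext_P using fun d : Subtype P => hnext d.1 d.2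
  let step : Subtype P → Subtype P := fun d => ⟨next d, hnext_P d⟩
  refine hinf (fun i => (step^[i] ⟨c, .refl, hc⟩).1) ⟨rfl, fun i => ?_⟩
  simp only [Function.iterate_succ_apply']
  exact hnext_step _

end Game

section Branching

variable {X A : Type} (tr : X → A → X → Prop) (τ : A)

theorem bMove_pair_comm {u v : X} {c : BConf X A} :
    BMove tr τ (.pair u v) c ↔ BMove tr τ (.pair v u) c := by
  have swap : ∀ {u v : X}, BMove tr τ (.pair u v) c → BMove tr τ (.pair v u) c := by
    intro u v h
    cases h with
    | s1l htr => exact .s1r htr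
    | s1r htr => exact .s1l htr
  exact ⟨swap, swap⟩

theorem isBranchingApartnessRel_spoilerAttr [Finite X] :
    IsBranchingApartnessRel tr τ fun u v => ∃ n, SpoilerAttr (BMove tr τ) BIsS n (.pair u v) := by
  refine ⟨fun u v ⟨n, h⟩ =>
    ⟨n, (spoilerAttr_congr (isS := BIsS) (c := .pair u v) (d := .pair v u) Iff.rfl
      (fun _ => bMove_pair_comm tr τ) n).1 h⟩, ?_⟩
  intro u v α u' htr hresp
  have hev : ∀ p : X × X, ∀ᶠ n in Filter.atTop, TauStar tr τ v p.1 → TrOpt tr τ p.1 α p.2 →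
      SpoilerAttr (BMove tr τ) BIsS n (.pair u p.1) ∨
        SpoilerAttr (BMove tr τ) BIsS n (.pair u' p.2) := by
    rintro ⟨v', v''⟩
    by_cases hv : TauStar tr τ v v' ∧ TrOpt tr τ v' α v''
    · rcases hresp v' v'' hv.1 hv.2 with ⟨n, hn⟩ | ⟨n, hn⟩
      · exact hn.eventually.mono fun _ h _ _ => Or.inl h
      · exact hn.eventually.mono fun _ h _ _ => Or.inr h
    · exact .of_forall fun _ h₁ h₂ => absurd ⟨h₁, h₂⟩ hv
  obtain ⟨N, hN⟩ := (Filter.eventually_all.2 hev).exists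
  have hquint : ∀ v' v'', TauStar tr τ v v' → TrOpt tr τ v' α v'' →
      SpoilerAttr (BMove tr τ) BIsS (N + 1) (.quint u u' v v' v'') := by
    intro v' v'' h₁ h₂
    rcases hN (v', v'') h₁ h₂ with h | h
    · exact .succ_of_move trivial .s2a h
    · exact .succ_of_move trivial .s2b h
  have hdup : SpoilerAttr (BMove tr τ) BIsS (N + 2) (.dup u α u' v) :=
    .succ_of_forall id fun c hmove => by
      cases hmove with
      | d h₁ h₂ => exact hquint _ _ h₁ h₂
  exact ⟨N + 3, .succ_of_move trivial (.s1l htr) hdup⟩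

/-- Duplicator's invariant; a `dup` configuration records that its challenge is a real
transition, so that the apartness rule applies there. -/
def BConf.OutsideRel (R : X → X → Prop) : BConf X A → Prop
  | .pair u v => ¬ R u v
  | .quint u u' _ v' v'' => ¬ R u v' ∧ ¬ R u' v''
  | .dup u α u' v => tr u α u' ∧ ¬ R u v

theorem not_spoilerWinsFrom_of_isBranchingApartnessRel {R : X → X → Prop}
    (hR : IsBranchingApartnessRel tr τ R) {u v : X} (huv : ¬ R u v) (π : BConf X A → BConf X A) :
    ¬ SpoilerWinsFrom (BMove tr τ) BIsS π (.pair u v) := by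
  refine not_spoilerWinsFrom_of_trap (BConf.OutsideRel tr R) huv ?_ ?_
  · intro c c' hc hout hmove
    cases hmove with
    | s1l htr => exact ⟨htr, hout⟩
    | s1r htr => exact ⟨htr, fun h => hout (hR.1 h)⟩
    | s2a => exact hout.1
    | s2b => exact hout.2
    | d => exact hc.elim
  · rintro (_ | _ | ⟨u, α, u', v⟩) hc hout
    all_goals try exact absurd trivial hc
    obtain ⟨htr, huv⟩ := hout
    by_contra! hstuck
    refine huv (hR.2 u v α u' htr fun v' v'' h₁ h₂ => ?_)
    by_contra! hout
    exact hstuck _ (.d h₁ h₂) hout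

end Branching

/-- For a finite LTS, `x` and `y` are branching apart iff `[x,y]` is winning for
Spoiler in the branching bisimulation game. -/
theorem branchingApart_iff_spoiler_wins {X A : Type} [Finite X]
    (tr : X → A → X → Prop) (τ : A) (x y : X) :
    BranchingApart tr τ x y ↔ (x, y) ∈ BSpoilerRegion tr τ := by
  constructor
  · intro hxy
    obtain ⟨n, hn⟩ := hxy _ (isBranchingApartnessRel_spoilerAttr tr τ)
    exact ⟨_, spoilerWinsFrom_spoilerAttrStrategy hn⟩
  · rintro ⟨π, hπ⟩ R hR
    by_contra hxy
    exact not_spoilerWinsFrom_of_isBranchingApartnessRel tr τ hR hxy π hπ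
end
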